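/- (Proposition 2(i).) Assume (1/n) M̃_nᵀ M̃_n converges in probability to H + σ_M² I, the deterministic matrices satisfy (1/n) D_n → 0, and U_n = 0 almost surely for every n (no unobserved confounder). Then the conditional bias of the BIMA estimator, B_n = (M̃_nᵀM̃_n + D_n)⁻¹ (M̃_nᵀ U_n − D_n θ⁰), converges in probability to 0. -/

import Mathlib

/-!
Off the null event `Uₙ ≠ 0`, dividing numerator and denominator by `n` writes the bias as
`-((Aₙ + Eₙ)⁻¹ Eₙ) θ⁰` with `Aₙ = n⁻¹ M̃ₙᵀM̃ₙ → H + σ_M² I` in probability and `Eₙ = n⁻¹ Dₙ → 0`.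
The limit `H + σ_M² I` is positive definite, so `(A, E) ↦ -((A + E)⁻¹ E) θ⁰` is continuous at
`(H + σ_M² I, 0)`, where it vanishes; the continuous mapping theorem for convergence in
probability to a constant concludes.
-/

open MeasureTheory Matrix Filter Topology

namespace MeasureTheory

variable {α ι : Type*} [MeasurableSpace α] {μ : Measure α} {l : Filter ι}

theorem tendstoInMeasure_pi {κ : Type*} [Fintype κ] {E : κ → Type*} [∀ k, EDist (E k)]
    {f : ι → α → ∀ k, E k} {g : α → ∀ k, E k}
    (h : ∀ k, TendstoInMeasure μ (fun i x => f i x k) l (fun x => g x k)) :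
    TendstoInMeasure μ f l g := by
  intro ε hε
  have hsub : ∀ i, {x | ε ≤ edist (f i x) (g x)} ⊆ ⋃ k, {x | ε ≤ edist (f i x k) (g x k)} := by
    intro i x hx
    rw [Set.mem_ofPred_eq, edist_pi_def] at hx
    obtain ⟨k, -, hk⟩ := (Finset.le_sup_iff hε.bot_lt).mp hx
    exact Set.mem_iUnion.mpr ⟨k, hk⟩
  refine tendsto_of_tendsto_of_tendsto_of_le_of_le tendsto_const_nhds
    (by simpa using tendsto_finsetSum Finset.univ fun k _ => h k ε hε) (fun _ => zero_le)
    fun i => (measure_mono (hsub i)).trans (measure_iUnion_fintype_le μ _)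

theorem TendstoInMeasure.prodMk {E F : Type*} [PseudoEMetricSpace E] [PseudoEMetricSpace F]
    {f : ι → α → E} {g : α → E} {f' : ι → α → F} {g' : α → F}
    (hf : TendstoInMeasure μ f l g) (hf' : TendstoInMeasure μ f' l g') :
    TendstoInMeasure μ (fun i x => (f i x, f' i x)) l (fun x => (g x, g' x)) := by
  intro ε hε
  have hsub : ∀ i, {x | ε ≤ edist (f i x, f' i x) (g x, g' x)} ⊆
      {x | ε ≤ edist (f i x) (g x)} ∪ {x | ε ≤ edist (f' i x) (g' x)} := by
    intro i x hx
    simpa [Prod.edist_eq, le_max_iff] using hx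
  refine tendsto_of_tendsto_of_tendsto_of_le_of_le tendsto_const_nhds
    (by simpa using (hf ε hε).add (hf' ε hε)) (fun _ => zero_le)
    fun i => (measure_mono (hsub i)).trans (measure_union_le _ _)

theorem _root_.Filter.Tendsto.tendstoInMeasure_const {E : Type*} [PseudoEMetricSpace E]
    {a : ι → E} {b : E} (h : Tendsto a l (𝓝 b)) :
    TendstoInMeasure μ (fun i _ => a i) l (fun _ => b) := by
  intro ε hε
  refine tendsto_const_nhds.congr' ?_
  filter_upwards [EMetric.tendsto_nhds.mp h ε hε] with i hi
  simp [not_le.mpr hi]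

theorem TendstoInMeasure.comp_continuousAt {E F : Type*} [PseudoEMetricSpace E]
    [PseudoEMetricSpace F] {f : ι → α → E} {c : E} {φ : E → F}
    (hf : TendstoInMeasure μ f l (fun _ => c)) (hφ : ContinuousAt φ c) :
    TendstoInMeasure μ (fun i x => φ (f i x)) l (fun _ => φ c) := by
  intro ε hε
  obtain ⟨δ, hδ, hball⟩ := EMetric.continuousAt_iff.mp hφ ε hε
  refine tendsto_of_tendsto_of_tendsto_of_le_of_le tendsto_const_nhds (hf δ hδ)
    (fun _ => zero_le) fun i => measure_mono fun x hx => ?_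
  by_contra hlt
  exact (not_lt.mpr hx) (hball (not_le.mp hlt))

end MeasureTheory

namespace Matrix

variable {n : Type*} [Fintype n] [DecidableEq n]

theorem inv_smul_mul_smul {𝕜 : Type*} [Field 𝕜] {c : 𝕜} (hc : c ≠ 0) (A B : Matrix n n 𝕜) :
    (c • A)⁻¹ * (c • B) = A⁻¹ * B := by
  by_cases hA : IsUnit A.det
  · have : Invertible c := invertibleOfNonzero hc
    rw [inv_smul A c hA, Matrix.smul_mul, Matrix.mul_smul, smul_smul, invOf_mul_self, one_smul]
  · have hcA : ¬IsUnit (c • A).det := by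
      rw [det_smul, IsUnit.mul_iff, not_and_or]
      exact Or.inr hA
    rw [nonsing_inv_apply_not_isUnit _ hA, nonsing_inv_apply_not_isUnit _ hcA, zero_mul, zero_mul]

theorem continuousAt_add_inv_mul_mulVec {𝕜 : Type*} [Field 𝕜] [TopologicalSpace 𝕜]
    [IsTopologicalRing 𝕜] [ContinuousInv₀ 𝕜] {A E : Matrix n n 𝕜} (h : IsUnit (A + E).det)
    (v : n → 𝕜) :
    ContinuousAt (fun p : Matrix n n 𝕜 × Matrix n n 𝕜 => ((p.1 + p.2)⁻¹ * p.2) *ᵥ v) (A, E) := by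
  have hinv : ContinuousAt Inv.inv (A + E) := continuousAt_matrix_inv _ <| by
    rw [Ring.inverse_eq_inv']
    exact continuousAt_inv₀ h.ne_zero
  have hmul : Continuous (fun q : Matrix n n 𝕜 × Matrix n n 𝕜 => (q.1 * q.2) *ᵥ v) :=
    (continuous_fst.matrix_mul continuous_snd).matrix_mulVec continuous_const
  exact hmul.continuousAt.comp (f := fun p : Matrix n n 𝕜 × Matrix n n 𝕜 => ((p.1 + p.2)⁻¹, p.2))
    ((hinv.comp (f := fun p : Matrix n n 𝕜 × Matrix n n 𝕜 => p.1 + p.2)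
      continuous_add.continuousAt).prodMk continuousAt_snd)

end Matrix

open scoped Matrix.Norms.Elementwise

theorem bima_asymptotic_bias_no_confounder_general
    {Ω : Type*} [MeasurableSpace Ω] (P : Measure Ω) [IsProbabilityMeasure P]
    {L : ℕ} (σM : ℝ) (hσM : 0 < σM)
    (H : Matrix (Fin L) (Fin L) ℝ) (hH : H.PosSemidef)
    (θ0 : Fin L → ℝ)
    (M : (n : ℕ) → Ω → Matrix (Fin n) (Fin L) ℝ)
    (U : (n : ℕ) → Ω → Fin n → ℝ)
    (D : ℕ → Matrix (Fin L) (Fin L) ℝ)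
    (hMM : ∀ l l' : Fin L, TendstoInMeasure P
      (fun (n : ℕ) (ω : Ω) => (n : ℝ)⁻¹ * (((M n ω)ᵀ * M n ω) l l')) atTop
      (fun _ => (H + σM ^ 2 • (1 : Matrix (Fin L) (Fin L) ℝ)) l l'))
    (hDlim : Tendsto (fun n : ℕ => ((n : ℝ)⁻¹) • D n) atTop (nhds 0))
    (hU : ∀ n, ∀ᵐ ω ∂P, U n ω = 0) :
    TendstoInMeasure P
      (fun (n : ℕ) (ω : Ω) =>
        ((M n ω)ᵀ * M n ω + D n)⁻¹ *ᵥ ((M n ω)ᵀ *ᵥ U n ω - (D n) *ᵥ θ0)) atTop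
      (fun _ => (0 : Fin L → ℝ)) := by
  set K := H + σM ^ 2 • (1 : Matrix (Fin L) (Fin L) ℝ)
  have hK : K.PosDef := PosDef.posSemidef_add hH <| by
    rw [smul_one_eq_diagonal]
    exact PosDef.diagonal fun _ => pow_pos hσM 2
  have hgram : TendstoInMeasure P (fun (n : ℕ) ω => (n : ℝ)⁻¹ • ((M n ω)ᵀ * M n ω)) atTop
      (fun _ => K) :=
    tendstoInMeasure_pi fun l => tendstoInMeasure_pi fun l' => hMM l l'
  have hcont := continuousAt_add_inv_mul_mulVec (A := K) (E := 0)
    (by simpa using (isUnit_iff_isUnit_det K).mp hK.isUnit) θ0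
  refine ((hgram.prodMk hDlim.tendstoInMeasure_const).comp_continuousAt hcont.neg).congr' ?_
    (by simp)
  filter_upwards [eventually_ne_atTop 0] with n hn
  filter_upwards [hU n] with ω hω
  simp only [Pi.neg_apply, hω, mulVec_zero, zero_sub, mulVec_neg, mulVec_mulVec, ← smul_add,
    inv_smul_mul_smul (inv_ne_zero (Nat.cast_ne_zero.mpr hn) : (n : ℝ)⁻¹ ≠ 0)]

/-- **Proposition 2(i).**
If `(1/n) M̃ₙᵀM̃ₙ → H + σ_M² I` in probability (entrywise), `(1/n) Dₙ → 0`, and there is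
no unobserved confounder (`Uₙ = 0` almost surely for every `n`), then the conditional
bias of the BIMA estimator, `Bₙ = (M̃ₙᵀM̃ₙ + Dₙ)⁻¹ (M̃ₙᵀUₙ − Dₙθ⁰)`, converges in
probability to `0`. -/
theorem bima_asymptotic_bias_no_confounder
    {Ω : Type*} [MeasurableSpace Ω] (P : Measure Ω) [IsProbabilityMeasure P]
    {L : ℕ} (σM : ℝ) (hσM : 0 < σM)
    (H : Matrix (Fin L) (Fin L) ℝ) (hH : H.PosSemidef)
    (θ0 : Fin L → ℝ)
    (M : (n : ℕ) → Ω → Matrix (Fin n) (Fin L) ℝ)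
    (U : (n : ℕ) → Ω → Fin n → ℝ)
    (D : ℕ → Matrix (Fin L) (Fin L) ℝ) (hD : ∀ n, (D n).PosSemidef)
    (hMM : ∀ l l' : Fin L, TendstoInMeasure P
      (fun (n : ℕ) (ω : Ω) => (n : ℝ)⁻¹ * (((M n ω)ᵀ * M n ω) l l')) atTop
      (fun _ => (H + σM ^ 2 • (1 : Matrix (Fin L) (Fin L) ℝ)) l l'))
    (hDlim : Tendsto (fun n : ℕ => ((n : ℝ)⁻¹) • D n) atTop (nhds 0))
    (hU : ∀ n, ∀ᵐ ω ∂P, U n ω = 0) :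
    TendstoInMeasure P
      (fun (n : ℕ) (ω : Ω) =>
        ((M n ω)ᵀ * M n ω + D n)⁻¹ *ᵥ ((M n ω)ᵀ *ᵥ U n ω - (D n) *ᵥ θ0)) atTop
      (fun _ => (0 : Fin L → ℝ)) :=
  bima_asymptotic_bias_no_confounder_general P σM hσM H hH θ0 M U D hMM hDlim hU
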